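/- Let S be a set of n ≥ 6 points in the Euclidean plane in general position, with n ≡ 2 (mod 4). Then the reduced Euler characteristic of the Voronoi poset of S is even: with the convention f_0 = 1, the alternating sum ∑_{k=0}^{n} (−1)^k f_k is an even integer. -/

import Mathlib

open scoped Classical

noncomputable section

/-- The Euclidean plane. -/
abbrev Plane := EuclideanSpace ℝ (Fin 2)

/-- General position: no three points of `S` are collinear and
no four points of `S` lie on a common circle. -/
def GenPos (S : Finset Plane) : Prop :=
  (∀ T ⊆ S, T.card = 3 → ¬ Collinear ℝ (T : Set Plane)) ∧
  (∀ T ⊆ S, T.card = 4 → ¬ ∃ (o : Plane) (r : ℝ), ∀ p ∈ T, dist p o = r)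

/-- The Voronoi region of `A ⊆ S`: points at least as close to every
point of `A` as to every point of `S \ A`. -/
def VorRegion (S A : Finset Plane) : Set Plane :=
  {p | ∀ x ∈ A, ∀ y ∈ S \ A, dist p x ≤ dist p y}

/-- `fVec S k` : the number of `k`-element subsets `A` of `S` with
nonempty Voronoi region, i.e. the number of regions of the `k`-th
order Voronoi diagram. -/
def fVec (S : Finset Plane) (k : ℕ) : ℕ :=
  ((S.powersetCard k).filter (fun A => (VorRegion S A).Nonempty)).card

/-- `fInfVec S k` : the number of `k`-element subsets `A` of `S` whose
Voronoi region is nonempty and unbounded. -/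
def fInfVec (S : Finset Plane) (k : ℕ) : ℕ :=
  ((S.powersetCard k).filter
    (fun A => (VorRegion S A).Nonempty ∧
      ¬ Bornology.IsBounded (VorRegion S A))).card

/-- `cVec S i` : the number of 3-element subsets `T` of `S` whose
circumscribed circle contains exactly `i` points of `S \ T` strictly
inside (`0` for `i < 0`). -/
def cVec (S : Finset Plane) (i : ℤ) : ℕ :=
  ((S.powersetCard 3).filter (fun T => ∃ (o : Plane) (r : ℝ),
    (∀ p ∈ T, dist p o = r) ∧
    (((S \ T).filter (fun q => dist q o < r)).card : ℤ) = i)).card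

section VoronoiAux

open Finset

def Feas (E G A : Finset Plane) : Prop :=
  ∃ p : Plane,
    (∀ e ∈ E, ∀ e' ∈ E, dist p e = dist p e') ∧
    (∀ a ∈ A, ∀ e ∈ E, dist p a ≤ dist p e) ∧
    (∀ e ∈ E, ∀ b ∈ G \ A, dist p e ≤ dist p b) ∧
    (∀ a ∈ A, ∀ b ∈ G \ A, dist p a ≤ dist p b)

lemma sq_dist_le {p z w : Plane} (h : dist p z ^ 2 ≤ dist p w ^ 2) : dist p z ≤ dist p w := by
  nlinarith [dist_nonneg (x := p) (y := z), dist_nonneg (x := p) (y := w)]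

lemma sq_dist_eq {p z w : Plane} (h : dist p z ^ 2 = dist p w ^ 2) : dist p z = dist p w := by
  nlinarith [dist_nonneg (x := p) (y := z), dist_nonneg (x := p) (y := w)]

lemma seg_affine (p₁ p₂ z w : Plane) (t : ℝ) :
    dist (p₁ + t • (p₂ - p₁)) z ^ 2 - dist (p₁ + t • (p₂ - p₁)) w ^ 2
      = (1 - t) * (dist p₁ z ^ 2 - dist p₁ w ^ 2) + t * (dist p₂ z ^ 2 - dist p₂ w ^ 2) := by
  have key : ∀ x : Plane, dist x z ^ 2 - dist x w ^ 2
      = ‖z‖ ^ 2 - ‖w‖ ^ 2 - 2 * (inner ℝ x z - inner ℝ x w : ℝ) := by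
    intro x
    rw [dist_eq_norm, dist_eq_norm, norm_sub_sq_real, norm_sub_sq_real]
    ring
  rw [key, key, key]
  have hz : (inner ℝ (p₁ + t • (p₂ - p₁)) z : ℝ) = inner ℝ p₁ z + t * (inner ℝ p₂ z - inner ℝ p₁ z) := by
    rw [inner_add_left, real_inner_smul_left, inner_sub_left]
  have hw : (inner ℝ (p₁ + t • (p₂ - p₁)) w : ℝ) = inner ℝ p₁ w + t * (inner ℝ p₂ w - inner ℝ p₁ w) := by
    rw [inner_add_left, real_inner_smul_left, inner_sub_left]
  rw [hz, hw]; ring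

section segfacts
variable (p₁ p₂ : Plane)

/-- the point at parameter t -/
def segPt (t : ℝ) : Plane := p₁ + t • (p₂ - p₁)

lemma segPt_zero : segPt p₁ p₂ 0 = p₁ := by simp [segPt]

lemma segPt_one : segPt p₁ p₂ 1 = p₂ := by simp [segPt]

lemma seg_mono {z w : Plane} (h0 : dist p₁ z ≤ dist p₁ w) (h1 : dist p₂ z ≤ dist p₂ w)
    {t : ℝ} (ht : t ∈ Set.Icc (0:ℝ) 1) :
    dist (segPt p₁ p₂ t) z ^ 2 ≤ dist (segPt p₁ p₂ t) w ^ 2 := by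
  have := seg_affine p₁ p₂ z w t
  have h0' : dist p₁ z ^ 2 ≤ dist p₁ w ^ 2 := by
    have := dist_nonneg (x := p₁) (y := z); nlinarith
  have h1' : dist p₂ z ^ 2 ≤ dist p₂ w ^ 2 := by
    have := dist_nonneg (x := p₂) (y := z); nlinarith
  obtain ⟨ht0, ht1⟩ := ht
  simp only [segPt] at *
  nlinarith

lemma seg_mono' {z w : Plane} (h0 : dist p₁ z ≤ dist p₁ w) (h1 : dist p₂ z ≤ dist p₂ w)
    {t : ℝ} (ht : t ∈ Set.Icc (0:ℝ) 1) :
    dist (segPt p₁ p₂ t) z ≤ dist (segPt p₁ p₂ t) w :=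
  sq_dist_le (seg_mono p₁ p₂ h0 h1 ht)

lemma seg_eq {z w : Plane} (h0 : dist p₁ z = dist p₁ w) (h1 : dist p₂ z = dist p₂ w)
    {t : ℝ} (ht : t ∈ Set.Icc (0:ℝ) 1) :
    dist (segPt p₁ p₂ t) z = dist (segPt p₁ p₂ t) w := by
  apply sq_dist_eq
  have h₁ := seg_mono p₁ p₂ h0.le h1.le ht
  have h₂ := seg_mono p₁ p₂ h0.ge h1.ge ht
  linarith

lemma seg_cont (z : Plane) : Continuous (fun t => dist (segPt p₁ p₂ t) z ^ 2) := by
  apply Continuous.pow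
  exact Continuous.dist (continuous_const.add (continuous_id.smul continuous_const))
    continuous_const

end segfacts

lemma insert_sdiff_insert_eq {s A : Finset Plane} {y : Plane} (hy : y ∉ s) :
    (insert y s) \ (insert y A) = s \ A := by
  ext z
  simp only [mem_sdiff, mem_insert]
  constructor
  · rintro ⟨rfl | hz, h2⟩
    · exact absurd (Or.inl rfl) h2
    · exact ⟨hz, fun h => h2 (Or.inr h)⟩
  · rintro ⟨hz, h2⟩
    refine ⟨Or.inr hz, ?_⟩
    rintro (rfl | h)
    · exact hy hz
    · exact h2 h

/-- splitting lemma: if both extensions are feasible then the equality version is feasible -/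
lemma feas_split {E s A : Finset Plane} {y : Plane} (hy : y ∉ s) (hA : A ⊆ s)
    (h1 : Feas E (insert y s) (insert y A)) (h2 : Feas E (insert y s) A) :
    Feas (insert y E) s A := by
  have hyA : y ∉ A := fun h' => hy (hA h')
  obtain ⟨p₁, hee1, hae1, heb1, hab1⟩ := h1
  obtain ⟨p₂, hee2, hae2, heb2, hab2⟩ := h2
  rw [insert_sdiff_insert_eq hy] at heb1 hab1
  have hGA : (insert y s) \ A = insert y (s \ A) := by
    rw [insert_sdiff_of_notMem _ hyA]
  rw [hGA] at heb2 hab2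
  -- endpoint facts
  have hya1 : ∀ e ∈ E, dist p₁ y ≤ dist p₁ e := fun e he =>
    hae1 y (mem_insert_self y A) e he
  have hyb1 : ∀ b ∈ s \ A, dist p₁ y ≤ dist p₁ b := fun b hb =>
    hab1 y (mem_insert_self y A) b hb
  have hae1' : ∀ a ∈ A, ∀ e ∈ E, dist p₁ a ≤ dist p₁ e := fun a ha e he =>
    hae1 a (mem_insert_of_mem ha) e he
  have hab1' : ∀ a ∈ A, ∀ b ∈ s \ A, dist p₁ a ≤ dist p₁ b := fun a ha b hb =>
    hab1 a (mem_insert_of_mem ha) b hb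
  have hey2 : ∀ e ∈ E, dist p₂ e ≤ dist p₂ y := fun e he =>
    heb2 e he y (mem_insert_self y _)
  have hay2 : ∀ a ∈ A, dist p₂ a ≤ dist p₂ y := fun a ha =>
    hab2 a ha y (mem_insert_self y _)
  have heb2' : ∀ e ∈ E, ∀ b ∈ s \ A, dist p₂ e ≤ dist p₂ b := fun e he b hb =>
    heb2 e he b (mem_insert_of_mem hb)
  have hab2' : ∀ a ∈ A, ∀ b ∈ s \ A, dist p₂ a ≤ dist p₂ b := fun a ha b hb =>
    hab2 a ha b (mem_insert_of_mem hb)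
  rcases E.eq_empty_or_nonempty with rfl | ⟨e₀, he₀⟩
  · -- E = ∅ : sup argument
    set f : Plane → ℝ → ℝ := fun z t => dist (segPt p₁ p₂ t) z ^ 2 with hf
    set T : Set ℝ := Set.Icc (0:ℝ) 1 ∩ ⋂ b ∈ (s \ A), {t | f y t ≤ f b t} with hT
    have hTsub : T ⊆ Set.Icc (0:ℝ) 1 := Set.inter_subset_left
    have hTclosed : IsClosed T := by
      apply IsClosed.inter isClosed_Icc
      exact isClosed_biInter fun b _ => isClosed_le (seg_cont p₁ p₂ y) (seg_cont p₁ p₂ b)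
    have hTne : (0:ℝ) ∈ T := by
      constructor
      · exact Set.mem_Icc.mpr ⟨le_refl 0, zero_le_one⟩
      · simp only [Set.mem_iInter, Set.mem_setOf_eq]
        intro b hb
        simp only [hf, segPt_zero]
        have := hyb1 b hb
        nlinarith [dist_nonneg (x := p₁) (y := y)]
    have hTcomp : IsCompact T := isCompact_Icc.inter_right
      (isClosed_biInter fun b _ => isClosed_le (seg_cont p₁ p₂ y) (seg_cont p₁ p₂ b))
    set t₀ := sSup T with ht₀def
    have ht₀T : t₀ ∈ T := hTcomp.sSup_mem ⟨0, hTne⟩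
    have ht₀Icc : t₀ ∈ Set.Icc (0:ℝ) 1 := hTsub ht₀T
    have ht₀b : ∀ b ∈ s \ A, f y t₀ ≤ f b t₀ := by
      have := ht₀T.2
      simp only [Set.mem_iInter, Set.mem_setOf_eq] at this
      exact this
    have ht₀a : ∀ a ∈ A, f a t₀ ≤ f y t₀ := by
      by_contra hcon
      push_neg at hcon
      obtain ⟨a₀, ha₀, hlt⟩ := hcon
      -- strict inequalities with all b
      have hblt : ∀ b ∈ s \ A, f y t₀ < f b t₀ := fun b hb =>
        lt_of_lt_of_le hlt (seg_mono p₁ p₂ (hab1' a₀ ha₀ b hb) (hab2' a₀ ha₀ b hb) ht₀Icc)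
      have ht₀ne1 : t₀ ≠ 1 := by
        intro h
        have h1 : f a₀ t₀ ≤ f y t₀ := by
          rw [h]
          simp only [hf, segPt_one]
          have := hay2 a₀ ha₀
          nlinarith [dist_nonneg (x := p₂) (y := a₀)]
        linarith
      have ht₀lt1 : t₀ < 1 := lt_of_le_of_ne ht₀Icc.2 ht₀ne1
      set O : Set ℝ := ⋂ b ∈ (s \ A), {t | f y t < f b t} with hO
      have hOopen : IsOpen O :=
        isOpen_biInter_finset fun b _ => isOpen_lt (seg_cont p₁ p₂ y) (seg_cont p₁ p₂ b)
      have ht₀O : t₀ ∈ O := by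
        simp only [hO, Set.mem_iInter, Set.mem_setOf_eq]
        exact hblt
      obtain ⟨ε, hε, hball⟩ := Metric.isOpen_iff.mp hOopen t₀ ht₀O
      set t₁ := min (t₀ + ε/2) 1 with ht₁def
      have ht₀t₁ : t₀ < t₁ := lt_min (by linarith) ht₀lt1
      have ht₁O : t₁ ∈ O := by
        apply hball
        rw [Metric.mem_ball, Real.dist_eq, abs_lt]
        constructor
        · have := min_le_right (t₀ + ε/2) 1; nlinarith
        · have := min_le_left (t₀ + ε/2) 1; linarith
      have ht₁T : t₁ ∈ T := by
        constructor
        · exact Set.mem_Icc.mpr ⟨le_trans ht₀Icc.1 ht₀t₁.le, min_le_right _ _⟩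
        · simp only [Set.mem_iInter, Set.mem_setOf_eq]
          intro b hb
          simp only [hO, Set.mem_iInter, Set.mem_setOf_eq] at ht₁O
          exact (ht₁O b hb).le
      have : t₁ ≤ t₀ := le_csSup (BddAbove.mono hTsub bddAbove_Icc) ht₁T
      linarith
    -- now build the witness
    refine ⟨segPt p₁ p₂ t₀, ?_, ?_, ?_, ?_⟩
    · intro e he e' he'
      simp only [LawfulSingleton.insert_empty_eq, mem_singleton] at he he'
      subst he; subst he'; rfl
    · intro a ha e he
      simp only [LawfulSingleton.insert_empty_eq, mem_singleton] at he
      subst he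
      exact sq_dist_le (ht₀a a ha)
    · intro e he b hb
      simp only [LawfulSingleton.insert_empty_eq, mem_singleton] at he
      subst he
      exact sq_dist_le (ht₀b b hb)
    · intro a ha b hb
      exact seg_mono' p₁ p₂ (hab1' a ha b hb) (hab2' a ha b hb) ht₀Icc
  · -- E nonempty : intermediate value theorem
    set φ : ℝ → ℝ := fun t => dist (segPt p₁ p₂ t) y ^ 2 - dist (segPt p₁ p₂ t) e₀ ^ 2 with hφ
    have hφcont : Continuous φ := (seg_cont p₁ p₂ y).sub (seg_cont p₁ p₂ e₀)
    have hφ0 : φ 0 ≤ 0 := by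
      simp only [hφ, segPt_zero]
      have := hya1 e₀ he₀
      nlinarith [dist_nonneg (x := p₁) (y := y)]
    have hφ1 : 0 ≤ φ 1 := by
      simp only [hφ, segPt_one]
      have := hey2 e₀ he₀
      nlinarith [dist_nonneg (x := p₂) (y := e₀)]
    have hmem : (0:ℝ) ∈ Set.Icc (φ 0) (φ 1) := ⟨hφ0, hφ1⟩
    obtain ⟨t₀, ht₀Icc, ht₀⟩ := intermediate_value_Icc zero_le_one hφcont.continuousOn hmem
    have hye : dist (segPt p₁ p₂ t₀) y = dist (segPt p₁ p₂ t₀) e₀ := by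
      apply sq_dist_eq
      simp only [hφ] at ht₀
      linarith [ht₀]
    refine ⟨segPt p₁ p₂ t₀, ?_, ?_, ?_, ?_⟩
    · intro e he e' he'
      rcases mem_insert.mp he with rfl | heE
      · rcases mem_insert.mp he' with rfl | he'E
        · rfl
        · exact hye.trans (seg_eq p₁ p₂ (hee1 e₀ he₀ e' he'E) (hee2 e₀ he₀ e' he'E) ht₀Icc)
      · rcases mem_insert.mp he' with rfl | he'E
        · exact (hye.trans (seg_eq p₁ p₂ (hee1 e₀ he₀ e heE) (hee2 e₀ he₀ e heE) ht₀Icc)).symm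
        · exact seg_eq p₁ p₂ (hee1 e heE e' he'E) (hee2 e heE e' he'E) ht₀Icc
    · intro a ha e he
      rcases mem_insert.mp he with rfl | he
      · rw [hye]
        exact seg_mono' p₁ p₂ (hae1' a ha e₀ he₀) (hae2 a ha e₀ he₀) ht₀Icc
      · exact seg_mono' p₁ p₂ (hae1' a ha e he) (hae2 a ha e he) ht₀Icc
    · intro e he b hb
      rcases mem_insert.mp he with rfl | he
      · rw [hye]
        exact seg_mono' p₁ p₂ (heb1 e₀ he₀ b hb) (heb2' e₀ he₀ b hb) ht₀Icc
      · exact seg_mono' p₁ p₂ (heb1 e he b hb) (heb2' e he b hb) ht₀Icc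
    · intro a ha b hb
      exact seg_mono' p₁ p₂ (hab1' a ha b hb) (hab2' a ha b hb) ht₀Icc

/-- extension lemma: every feasible set extends when a new point is added to the ground set -/
lemma feas_extend {E s A : Finset Plane} {y : Plane} (hy : y ∉ s) (hA : A ⊆ s)
    (h : Feas E s A) : Feas E (insert y s) A ∨ Feas E (insert y s) (insert y A) := by
  obtain ⟨p, hee, hae, heb, hab⟩ := h
  have hyA : y ∉ A := fun h' => hy (hA h')
  have hGA : (insert y s) \ A = insert y (s \ A) := by
    rw [insert_sdiff_of_notMem _ hyA]
  have hGA' : (insert y s) \ (insert y A) = s \ A := by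
    ext z
    simp only [mem_sdiff, mem_insert]
    constructor
    · rintro ⟨rfl | hz, h2⟩
      · exact absurd (Or.inl rfl) h2
      · exact ⟨hz, fun h => h2 (Or.inr h)⟩
    · rintro ⟨hz, h2⟩
      refine ⟨Or.inr hz, ?_⟩
      rintro (rfl | h)
      · exact hy hz
      · exact h2 h
  by_cases hcase : (∀ a ∈ A, dist p a ≤ dist p y) ∧ (∀ e ∈ E, dist p e ≤ dist p y)
  · left
    refine ⟨p, hee, hae, ?_, ?_⟩
    · intro e he b hb
      rw [hGA] at hb
      rcases mem_insert.mp hb with rfl | hb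
      · exact hcase.2 e he
      · exact heb e he b hb
    · intro a ha b hb
      rw [hGA] at hb
      rcases mem_insert.mp hb with rfl | hb
      · exact hcase.1 a ha
      · exact hab a ha b hb
  · right
    push_neg at hcase
    -- we find that dist p y < dist p e for all e, and dist p y ≤ dist p b for all b ∈ s \ A
    have hkey : (∀ e ∈ E, dist p y ≤ dist p e) ∧ (∀ b ∈ s \ A, dist p y ≤ dist p b) := by
      by_cases h1 : ∀ a ∈ A, dist p a ≤ dist p y
      · obtain ⟨e₀, he₀, hlt⟩ := hcase h1
        constructor
        · intro e he; rw [hee e₀ he₀ e he] at hlt; exact hlt.le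
        · intro b hb; exact hlt.le.trans (heb e₀ he₀ b hb)
      · push_neg at h1
        obtain ⟨a₀, ha₀, hlt⟩ := h1
        exact ⟨fun e he => hlt.le.trans (hae a₀ ha₀ e he),
               fun b hb => hlt.le.trans (hab a₀ ha₀ b hb)⟩
    refine ⟨p, hee, ?_, ?_, ?_⟩
    · intro a ha e he
      rcases mem_insert.mp ha with rfl | ha
      · exact hkey.1 e he
      · exact hae a ha e he
    · intro e he b hb
      rw [hGA'] at hb
      exact heb e he b hb
    · intro a ha b hb
      rw [hGA'] at hb
      rcases mem_insert.mp ha with rfl | ha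
      · exact hkey.2 b hb
      · exact hab a ha b hb


def Ncells (E G : Finset Plane) : ℕ := (G.powerset.filter (fun A => Feas E G A)).card

lemma feas_restrict {E s A : Finset Plane} {y : Plane} (hy : y ∉ s) (hA : A ⊆ s)
    (h : Feas E (insert y s) A) : Feas E s A := by
  obtain ⟨p, hee, hae, heb, hab⟩ := h
  exact ⟨p, hee, hae,
    fun e he b hb => heb e he b (sdiff_subset_sdiff (subset_insert y s) (le_refl _) hb),
    fun a ha b hb => hab a ha b (sdiff_subset_sdiff (subset_insert y s) (le_refl _) hb)⟩

lemma feas_restrict' {E s A : Finset Plane} {y : Plane} (hy : y ∉ s) (hA : A ⊆ s)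
    (h : Feas E (insert y s) (insert y A)) : Feas E s A := by
  obtain ⟨p, hee, hae, heb, hab⟩ := h
  rw [insert_sdiff_insert_eq hy] at heb hab
  exact ⟨p, hee, fun a ha e he => hae a (mem_insert_of_mem ha) e he, heb,
    fun a ha b hb => hab a (mem_insert_of_mem ha) b hb⟩

lemma feas_or_iff {E s A : Finset Plane} {y : Plane} (hy : y ∉ s) (hA : A ⊆ s) :
    (Feas E (insert y s) A ∨ Feas E (insert y s) (insert y A)) ↔ Feas E s A := by
  constructor
  · rintro (h | h)
    · exact feas_restrict hy hA h
    · exact feas_restrict' hy hA h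
  · exact feas_extend hy hA

lemma feas_and_iff {E s A : Finset Plane} {y : Plane} (hy : y ∉ s) (hA : A ⊆ s) :
    (Feas E (insert y s) A ∧ Feas E (insert y s) (insert y A)) ↔ Feas (insert y E) s A := by
  have hyA : y ∉ A := fun h' => hy (hA h')
  have hGA : (insert y s) \ A = insert y (s \ A) := by
    rw [insert_sdiff_of_notMem _ hyA]
  constructor
  · rintro ⟨h2, h1⟩
    exact feas_split hy hA h1 h2
  · rintro ⟨p, hee, hae, heb, hab⟩
    have hyy : y ∈ insert y E := mem_insert_self y E
    have heE : ∀ e ∈ E, dist p y = dist p e := fun e he =>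
      hee y hyy e (mem_insert_of_mem he)
    constructor
    · -- Feas E (insert y s) A
      refine ⟨p, ?_, ?_, ?_, ?_⟩
      · exact fun e he e' he' => hee e (mem_insert_of_mem he) e' (mem_insert_of_mem he')
      · exact fun a ha e he => hae a ha e (mem_insert_of_mem he)
      · intro e he b hb
        rw [hGA] at hb
        rcases mem_insert.mp hb with rfl | hb
        · exact (heE e he).symm.le
        · exact heb e (mem_insert_of_mem he) b hb
      · intro a ha b hb
        rw [hGA] at hb
        rcases mem_insert.mp hb with rfl | hb
        · exact hae a ha b hyy
        · exact hab a ha b hb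
    · -- Feas E (insert y s) (insert y A)
      refine ⟨p, ?_, ?_, ?_, ?_⟩
      · exact fun e he e' he' => hee e (mem_insert_of_mem he) e' (mem_insert_of_mem he')
      · intro a ha e he
        rcases mem_insert.mp ha with rfl | ha
        · exact (heE e he).le
        · exact hae a ha e (mem_insert_of_mem he)
      · intro e he b hb
        rw [insert_sdiff_insert_eq hy] at hb
        exact heb e (mem_insert_of_mem he) b hb
      · intro a ha b hb
        rw [insert_sdiff_insert_eq hy] at hb
        rcases mem_insert.mp ha with rfl | ha
        · exact heb a hyy b hb
        · exact hab a ha b hb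

lemma Ncells_insert {E s : Finset Plane} {y : Plane} (hy : y ∉ s) :
    Ncells E (insert y s) = Ncells E s + Ncells (insert y E) s := by
  classical
  have hinj : Set.InjOn (insert y) (s.powerset : Set (Finset Plane)) := by
    intro A hA B hB hAB
    simp only [coe_powerset, Set.mem_preimage, Set.mem_powerset_iff] at hA hB
    have hyA : y ∉ A := fun h => hy (hA h)
    have hyB : y ∉ B := fun h => hy (hB h)
    apply ext
    intro z
    constructor
    · intro hz
      have : z ∈ insert y B := hAB ▸ mem_insert_of_mem hz
      rcases mem_insert.mp this with rfl | h
      · exact absurd hz hyA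
      · exact h
    · intro hz
      have : z ∈ insert y A := hAB.symm ▸ mem_insert_of_mem hz
      rcases mem_insert.mp this with rfl | h
      · exact absurd hz hyB
      · exact h
  have step1 : Ncells E (insert y s)
      = (s.powerset.filter (fun A => Feas E (insert y s) A)).card
      + (s.powerset.filter (fun A => Feas E (insert y s) (insert y A))).card := by
    unfold Ncells
    rw [powerset_insert, filter_union, card_union_of_disjoint, filter_image,
      card_image_of_injOn]
    · exact hinj.mono (by simp only [coe_filter]; exact fun A hA => hA.1)
    · rw [disjoint_left]
      intro A hA hA'
      have h1 : A ⊆ s := mem_powerset.mp (mem_of_mem_filter A hA)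
      have h2 := mem_of_mem_filter A hA'
      obtain ⟨B, _, rfl⟩ := mem_image.mp h2
      exact hy (h1 (mem_insert_self y B))
  rw [step1]
  unfold Ncells
  rw [card_filter, card_filter, card_filter, card_filter, ← sum_add_distrib,
    ← sum_add_distrib]
  apply sum_congr rfl
  intro A hA
  have hAs : A ⊆ s := mem_powerset.mp hA
  have hor := feas_or_iff (E := E) hy hAs
  have hand := feas_and_iff (E := E) hy hAs
  by_cases h1 : Feas E (insert y s) A <;> by_cases h2 : Feas E (insert y s) (insert y A)
  · have q1 : Feas E s A := hor.mp (Or.inl h1)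
    have q2 : Feas (insert y E) s A := hand.mp ⟨h1, h2⟩
    simp [h1, h2, q1, q2]
  · have q1 : Feas E s A := hor.mp (Or.inl h1)
    have q2 : ¬ Feas (insert y E) s A := fun h => h2 (hand.mpr h).2
    simp [h1, h2, q1, q2]
  · have q1 : Feas E s A := hor.mp (Or.inr h2)
    have q2 : ¬ Feas (insert y E) s A := fun h => h1 (hand.mpr h).1
    simp [h1, h2, q1, q2]
  · have q1 : ¬ Feas E s A := fun h => (hor.mpr h).elim h1 h2
    have q2 : ¬ Feas (insert y E) s A := fun h => h1 (hand.mpr h).1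
    simp [h1, h2, q1, q2]

/-- existence of an equidistant point for at most 3 points in general position -/
lemma exists_equidistant {S E : Finset Plane} (hgp : GenPos S) (hE : E ⊆ S)
    (hcard : E.card ≤ 3) : ∃ p : Plane, ∀ e ∈ E, ∀ e' ∈ E, dist p e = dist p e' := by
  interval_cases h : E.card
  · rw [card_eq_zero] at h
    subst h
    exact ⟨0, by simp⟩
  · rw [card_eq_one] at h
    obtain ⟨a, rfl⟩ := h
    refine ⟨0, ?_⟩
    intro e he e' he'
    rw [mem_singleton] at he he'
    subst he; subst he'; rfl
  · rw [card_eq_two] at h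
    obtain ⟨a, b, hab, rfl⟩ := h
    refine ⟨midpoint ℝ a b, ?_⟩
    have hmid : dist (midpoint ℝ a b) b = dist (midpoint ℝ a b) a := by
      rw [dist_midpoint_left, dist_midpoint_right]
    have key : ∀ e ∈ ({a, b} : Finset Plane),
        dist (midpoint ℝ a b) e = dist (midpoint ℝ a b) a := by
      intro e he
      simp only [mem_insert, mem_singleton] at he
      rcases he with h | h <;> rw [h]
      exact hmid
    intro e he e' he'
    rw [key e he, key e' he']
  · obtain ⟨a, b, c, hab, hac, hbc, rfl⟩ := card_eq_three.mp h
    have hnc : ¬ Collinear ℝ (({a, b, c} : Finset Plane) : Set Plane) := hgp.1 _ hE h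
    have hnc' : ¬ Collinear ℝ ({a, b, c} : Set Plane) := by
      simpa using hnc
    have hind : AffineIndependent ℝ ![a, b, c] :=
      affineIndependent_iff_not_collinear_set.mpr hnc'
    set t : Affine.Triangle ℝ Plane := ⟨![a, b, c], hind⟩ with ht
    refine ⟨t.circumcenter, ?_⟩
    have ka : dist t.circumcenter a = t.circumradius := by
      have := t.dist_circumcenter_eq_circumradius 0
      rwa [dist_comm, show t.points 0 = a from rfl] at this
    have kb : dist t.circumcenter b = t.circumradius := by
      have := t.dist_circumcenter_eq_circumradius 1
      rwa [dist_comm, show t.points 1 = b from rfl] at this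
    have kc : dist t.circumcenter c = t.circumradius := by
      have := t.dist_circumcenter_eq_circumradius 2
      rwa [dist_comm, show t.points 2 = c from rfl] at this
    have key : ∀ e ∈ ({a, b, c} : Finset Plane), dist t.circumcenter e = t.circumradius := by
      intro e he
      simp only [mem_insert, mem_singleton] at he
      rcases he with h | h | h <;> rw [h]
      · exact ka
      · exact kb
      · exact kc
    intro e he e' he'
    rw [key e he, key e' he']

/-- no equidistant point for 4 or more points in general position -/
lemma no_equidistant {S E : Finset Plane} (hgp : GenPos S) (hE : E ⊆ S)
    (hcard : 4 ≤ E.card) : ¬ ∃ p : Plane, ∀ e ∈ E, ∀ e' ∈ E, dist p e = dist p e' := by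
  rintro ⟨p, hp⟩
  obtain ⟨T, hTE, hT4⟩ := exists_subset_card_eq hcard
  have hTne : T.Nonempty := by
    rw [← card_pos, hT4]; norm_num
  obtain ⟨e₀, he₀⟩ := hTne
  apply hgp.2 T (hTE.trans hE) hT4
  refine ⟨p, dist e₀ p, ?_⟩
  intro q hq
  rw [dist_comm, dist_comm e₀ p]
  exact hp q (hTE hq) e₀ (hTE he₀)

lemma Ncells_empty_ground {S E : Finset Plane} (hgp : GenPos S) (hE : E ⊆ S) :
    Ncells E ∅ = if E.card ≤ 3 then 1 else 0 := by
  have hfeas : Feas E ∅ ∅ ↔ ∃ p : Plane, ∀ e ∈ E, ∀ e' ∈ E, dist p e = dist p e' := by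
    constructor
    · rintro ⟨p, hee, _, _, _⟩; exact ⟨p, hee⟩
    · rintro ⟨p, hee⟩
      exact ⟨p, hee, by simp, by simp, by simp⟩
  unfold Ncells
  rw [powerset_empty, filter_singleton]
  by_cases h : E.card ≤ 3
  · rw [if_pos (hfeas.mpr (exists_equidistant hgp hE h)), if_pos h, card_singleton]
  · rw [if_neg, if_neg h, card_empty]
    intro hcon
    exact no_equidistant hgp hE (by omega) (hfeas.mp hcon)

def boundFn (e g : ℕ) : ℕ := ∑ j ∈ range (4 - e), g.choose j

lemma boundFn_succ (e g : ℕ) : boundFn e (g + 1) = boundFn e g + boundFn (e + 1) g := by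
  unfold boundFn
  rcases e with _ | _ | _ | _ | e
  · simp [Finset.sum_range_succ, Nat.choose_succ_succ]
    omega
  · simp [Finset.sum_range_succ, Nat.choose_succ_succ]
    omega
  · simp [Finset.sum_range_succ, Nat.choose_succ_succ]
    omega
  · simp [Finset.sum_range_succ, Nat.choose_succ_succ]
  · simp [show 4 - (e + 4) = 0 from by omega, show 4 - (e + 5) = 0 from by omega]

lemma boundFn_zero (e : ℕ) : boundFn e 0 = if e ≤ 3 then 1 else 0 := by
  unfold boundFn
  rcases e with _ | _ | _ | _ | e
  · simp [Finset.sum_range_succ]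
  · simp [Finset.sum_range_succ]
  · simp [Finset.sum_range_succ]
  · simp [Finset.sum_range_succ]
  · simp [show 4 - (e + 4) = 0 from by omega]

lemma Ncells_formula {S : Finset Plane} (hgp : GenPos S) :
    ∀ G E : Finset Plane, G ⊆ S → E ⊆ S → Disjoint E G →
      Ncells E G = boundFn E.card G.card := by
  intro G
  induction G using Finset.induction_on with
  | empty =>
    intro E _ hE _
    rw [Ncells_empty_ground hgp hE, card_empty, boundFn_zero]
  | @insert y G hyG ih =>
    intro E hG hE hdisj
    have hyS : y ∈ S := hG (mem_insert_self y G)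
    have hGS : G ⊆ S := (subset_insert y G).trans hG
    have hyE : y ∉ E := fun h => (disjoint_left.mp hdisj h) (mem_insert_self y G)
    have hdisj1 : Disjoint E G := disjoint_of_subset_right (subset_insert y G) hdisj
    have hdisj2 : Disjoint (insert y E) G := by
      rw [disjoint_left]
      intro z hz hzG
      rcases mem_insert.mp hz with rfl | hz
      · exact hyG hzG
      · exact disjoint_left.mp hdisj hz (mem_insert_of_mem hzG)
    rw [Ncells_insert hyG, ih E hGS hE hdisj1,
      ih (insert y E) hGS (insert_subset hyS hE) hdisj2,
      card_insert_of_notMem hyG, card_insert_of_notMem hyE, boundFn_succ]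

lemma feas_iff_vor (S A : Finset Plane) : Feas ∅ S A ↔ (VorRegion S A).Nonempty := by
  constructor
  · rintro ⟨p, _, _, _, hab⟩
    exact ⟨p, hab⟩
  · rintro ⟨p, hp⟩
    exact ⟨p, by simp, by simp, by simp, hp⟩

lemma sum_fVec (S : Finset Plane) : ∑ k ∈ range (S.card + 1), fVec S k = Ncells ∅ S := by
  classical
  unfold fVec Ncells
  rw [powerset_card_biUnion, filter_biUnion, card_biUnion]
  · apply sum_congr rfl
    intro k _
    congr 1
    apply filter_congr
    intro A _
    rw [feas_iff_vor]
  · intro x _ y _ hxy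
    exact disjoint_filter_filter (S.pairwise_disjoint_powersetCard hxy)

lemma parity_key {n : ℕ} (h : n % 4 = 2) : Even (boundFn 0 n) := by
  obtain ⟨m, rfl⟩ : ∃ m, n = 4 * m + 2 := ⟨n / 4, by omega⟩
  have hb : boundFn 0 (4 * m + 2) = 1 + (4 * m + 2) + (4 * m + 2).choose 2
      + (4 * m + 2).choose 3 := by
    unfold boundFn
    simp [Finset.sum_range_succ]
  have h2 : (4 * m + 2).choose 2 = (2 * m + 1) * (4 * m + 1) := by
    rw [Nat.choose_two_right]
    have e1 : 4 * m + 2 - 1 = 4 * m + 1 := by omega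
    rw [e1]
    have e2 : (4 * m + 2) * (4 * m + 1) = 2 * ((2 * m + 1) * (4 * m + 1)) := by ring
    rw [e2, Nat.mul_div_cancel_left _ (by norm_num : (0:ℕ) < 2)]
  have h3 : Even ((4 * m + 2).choose 3) := by
    have hdesc : (4 * m + 2).descFactorial 3
        = (4 * m) * ((4 * m + 1) * ((4 * m + 2) * 1)) := by
      rw [Nat.descFactorial_succ, Nat.descFactorial_succ, Nat.descFactorial_succ,
        Nat.descFactorial_zero]
      have e1 : 4 * m + 2 - 2 = 4 * m := by omega
      have e2 : 4 * m + 2 - 1 = 4 * m + 1 := by omega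
      have e3 : 4 * m + 2 - 0 = 4 * m + 2 := by omega
      rw [e1, e2, e3]
    have hch : (4 * m + 2).choose 3 = (4 * m + 2).descFactorial 3 / 6 := by
      rw [Nat.choose_eq_descFactorial_div_factorial]
      norm_num [Nat.factorial]
    rcases (by omega : m % 3 = 0 ∨ m % 3 = 1 ∨ m % 3 = 2) with hm | hm | hm
    · obtain ⟨q, rfl⟩ : ∃ q, m = 3 * q := ⟨m / 3, by omega⟩
      have : (4 * (3 * q) + 2).descFactorial 3
          = 6 * (2 * (q * ((12 * q + 1) * (12 * q + 2)))) := by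
        rw [hdesc]; ring
      rw [hch, this, Nat.mul_div_cancel_left _ (by norm_num : (0:ℕ) < 6)]
      exact ⟨q * ((12 * q + 1) * (12 * q + 2)), by ring⟩
    · obtain ⟨q, rfl⟩ : ∃ q, m = 3 * q + 1 := ⟨m / 3, by omega⟩
      have : (4 * (3 * q + 1) + 2).descFactorial 3
          = 6 * (2 * (2 * ((3 * q + 1) * ((12 * q + 5) * (2 * q + 1))))) := by
        rw [hdesc]; ring
      rw [hch, this, Nat.mul_div_cancel_left _ (by norm_num : (0:ℕ) < 6)]
      exact ⟨2 * ((3 * q + 1) * ((12 * q + 5) * (2 * q + 1))), by ring⟩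
    · obtain ⟨q, rfl⟩ : ∃ q, m = 3 * q + 2 := ⟨m / 3, by omega⟩
      have : (4 * (3 * q + 2) + 2).descFactorial 3
          = 6 * (2 * (2 * ((3 * q + 2) * ((4 * q + 3) * (6 * q + 5))))) := by
        rw [hdesc]; ring
      rw [hch, this, Nat.mul_div_cancel_left _ (by norm_num : (0:ℕ) < 6)]
      exact ⟨2 * ((3 * q + 2) * ((4 * q + 3) * (6 * q + 5))), by ring⟩
  obtain ⟨w, hw⟩ := h3
  rw [hb, h2, hw]
  exact ⟨4 * m * m + 5 * m + 2 + w, by ring⟩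

theorem euler_char_even' (S : Finset Plane) (n : ℕ) (hn : S.card = n)
    (hn6 : 6 ≤ n) (hmod : n % 4 = 2) (hgp : GenPos S) :
    Even (∑ k ∈ Finset.range (n + 1), (-1 : ℤ) ^ k * (fVec S k : ℤ)) := by
  have h1 : ∑ k ∈ range (n + 1), fVec S k = boundFn 0 n := by
    rw [← hn, sum_fVec,
      Ncells_formula hgp S ∅ subset_rfl (empty_subset S) (disjoint_bot_left)]
    rw [card_empty]
  have h2 : Even (boundFn 0 n) := parity_key hmod
  have hcast : Even (∑ k ∈ range (n + 1), (fVec S k : ℤ)) := by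
    rw [← Nat.cast_sum]
    rw [Int.even_coe_nat]
    rw [h1]
    exact h2
  have key : ∀ k ∈ range (n + 1),
      Even ((-1 : ℤ) ^ k * (fVec S k : ℤ) + (fVec S k : ℤ)) := by
    intro k _
    rcases Nat.even_or_odd k with hk | hk
    · rw [hk.neg_one_pow, one_mul]
      exact ⟨(fVec S k : ℤ), rfl⟩
    · rw [hk.neg_one_pow, neg_one_mul, neg_add_cancel]
      exact Even.zero
  have hsum : Even (∑ k ∈ range (n + 1),
      ((-1 : ℤ) ^ k * (fVec S k : ℤ) + (fVec S k : ℤ))) := Finset.even_sum _ key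
  rw [sum_add_distrib] at hsum
  have : ∑ k ∈ range (n + 1), (-1 : ℤ) ^ k * (fVec S k : ℤ)
      = (∑ k ∈ range (n + 1), (-1 : ℤ) ^ k * (fVec S k : ℤ)
        + ∑ k ∈ range (n + 1), (fVec S k : ℤ))
        - ∑ k ∈ range (n + 1), (fVec S k : ℤ) := by ring
  rw [this]
  exact hsum.sub hcast

end VoronoiAux

/-- For `n ≡ 2 (mod 4)`, the reduced Euler characteristic of the
Voronoi poset is even. -/
theorem euler_char_even (S : Finset Plane) (n : ℕ) (hn : S.card = n)
    (hn6 : 6 ≤ n) (hmod : n % 4 = 2) (hgp : GenPos S) :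
    Even (∑ k ∈ Finset.range (n + 1), (-1 : ℤ) ^ k * (fVec S k : ℤ)) :=
  euler_char_even' S n hn hn6 hmod hgp
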